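/- Let d ≥ 1 be an integer and let a₁, a₂, b₁, b₂ be reals with a₁ ≥ b₁ > 0, a₁ + b₁ ≥ d, a₂ ≥ 0, b₂ ≥ 0, and a₂ ≥ b₂ if a₁ = b₁. Assume a₁ > d. Then there exists C < ∞ depending only on d, a₁, a₂, b₁, b₂ (in particular independent of L and x) such that for every real L ≥ 1 and every x ∈ ℤ^d: Σ_{y∈ℤ^d} ⟨x−y⟩_L^{−a₁}·(log⟨(x−y)/L⟩₁)^{−a₂} · ⟨y⟩_L^{−b₁}·(log⟨y/L⟩₁)^{−b₂} ≤ C · L^{d−a₁} · ⟨x⟩_L^{−b₁}·(log⟨x/L⟩₁)^{−b₂}. (Convolution bound on power functions with logarithmic corrections, case a₁ > d.) -/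

import Mathlib

open scoped BigOperators
open Real Filter

noncomputable section

/-- Embed a lattice point into Euclidean space. -/
def toR (d : ℕ) (x : Fin d → ℤ) : EuclideanSpace ℝ (Fin d) := WithLp.toLp 2 (fun i => (x i : ℝ))

/-- Euclidean norm of a lattice point. -/
def nrm (d : ℕ) (x : Fin d → ℤ) : ℝ := ‖toR d x‖

/-- Euclidean inner product between `k` and a lattice point `x`. -/
def dotp (d : ℕ) (k : EuclideanSpace ℝ (Fin d)) (x : Fin d → ℤ) : ℝ :=
  ∑ i, k i * (x i : ℝ)

/-- `D` is a (symmetric) step distribution on `ℤ^d`. -/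
def IsStepDistribution (d : ℕ) (D : (Fin d → ℤ) → ℝ) : Prop :=
  (∀ x, 0 ≤ D x) ∧ HasSum D 1 ∧ (∀ x, D (-x) = D x)

/-- The power-law condition with parameters `α, L, c`. -/
def PowerLawCondition (d : ℕ) (α L c : ℝ) (D : (Fin d → ℤ) → ℝ) : Prop :=
  ∀ x, c * L ^ (-(d : ℝ)) * (max (nrm d x / L) 1) ^ (-(d : ℝ) - α) ≤ D x ∧
       D x ≤ c⁻¹ * L ^ (-(d : ℝ)) * (max (nrm d x / L) 1) ^ (-(d : ℝ) - α)

/-- Fourier transform `D̂(k) = Σ_x cos(k⬝x) D(x)`. -/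
def fhat (d : ℕ) (D : (Fin d → ℤ) → ℝ) (k : EuclideanSpace ℝ (Fin d)) : ℝ :=
  ∑' x : Fin d → ℤ, Real.cos (dotp d k x) * D x

/-- `n`-fold convolution of `D` (with the 0-fold convolution the delta at 0). -/
def convPow (d : ℕ) (D : (Fin d → ℤ) → ℝ) : ℕ → (Fin d → ℤ) → ℝ
  | 0 => fun x => if x = 0 then 1 else 0
  | n + 1 => fun x => ∑' y : Fin d → ℤ, convPow d D n y * D (x - y)

/-- Random-walk Green function `S₁(x) = Σ_n D^{*n}(x)`. -/
def green (d : ℕ) (D : (Fin d → ℤ) → ℝ) (x : Fin d → ℤ) : ℝ :=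
  ∑' n : ℕ, convPow d D n x

/-- `⟨t⟩_r = (π/2) ⬝ max(t, r)`. -/
def vee (t r : ℝ) : ℝ := Real.pi / 2 * max t r

/-- The constant `γ_α`. -/
def gammaA (d : ℕ) (α : ℝ) : ℝ :=
  Real.Gamma (((d : ℝ) - α) / 2) /
    (2 ^ α * Real.pi ^ ((d : ℝ) / 2) * Real.Gamma (α / 2))


lemma toR_apply (d : ℕ) (x : Fin d → ℤ) (i : Fin d) : toR d x i = (x i : ℝ) := rfl

lemma toR_add (d : ℕ) (a b : Fin d → ℤ) : toR d (a + b) = toR d a + toR d b := by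
  ext i; show ((a i + b i : ℤ) : ℝ) = (a i : ℝ) + (b i : ℝ); push_cast; ring

lemma toR_sub (d : ℕ) (a b : Fin d → ℤ) : toR d (a - b) = toR d a - toR d b := by
  ext i; show ((a i - b i : ℤ) : ℝ) = (a i : ℝ) - (b i : ℝ); push_cast; ring

lemma nrm_nonneg (d : ℕ) (x : Fin d → ℤ) : 0 ≤ nrm d x := norm_nonneg _

lemma nrm_sub_ge (d : ℕ) (x y : Fin d → ℤ) : nrm d x - nrm d y ≤ nrm d (x - y) := by
  rw [nrm, nrm, nrm, toR_sub]; exact norm_sub_norm_le _ _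

lemma abs_coord_le_nrm (d : ℕ) (z : Fin d → ℤ) (i : Fin d) : |(z i : ℝ)| ≤ nrm d z := by
  rw [nrm, EuclideanSpace.norm_eq, ← Real.sqrt_sq_eq_abs]
  apply Real.sqrt_le_sqrt
  calc (z i : ℝ) ^ 2 ≤ ∑ j, ‖toR d z j‖ ^ 2 := by
        refine Finset.single_le_sum (f := fun j => ‖toR d z j‖^2) (fun j _ => by positivity) (Finset.mem_univ i) |>.trans_eq' ?_
        simp [toR_apply, sq_abs]
  _ = _ := rfl

lemma nrm_le_of_coord (d : ℕ) (z : Fin d → ℤ) (B : ℝ) (hB : 0 ≤ B)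
    (h : ∀ i, |(z i : ℝ)| ≤ B) : nrm d z ≤ Real.sqrt d * B := by
  rw [nrm, EuclideanSpace.norm_eq]
  have : ∑ i, ‖toR d z i‖ ^ 2 ≤ (d : ℝ) * B ^ 2 := by
    calc ∑ i, ‖toR d z i‖ ^ 2 ≤ ∑ _i : Fin d, B ^ 2 := by
          refine Finset.sum_le_sum fun i _ => ?_
          rw [toR_apply, Real.norm_eq_abs]
          exact pow_le_pow_left₀ (abs_nonneg _) (h i) 2
      _ = (d : ℝ) * B ^ 2 := by simp [mul_comm]
  calc Real.sqrt (∑ i, ‖toR d z i‖ ^ 2) ≤ Real.sqrt ((d:ℝ) * B^2) := Real.sqrt_le_sqrt this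
    _ = Real.sqrt d * B := by rw [Real.sqrt_mul (by positivity), Real.sqrt_sq hB]

lemma summable_int_max_rpow {q : ℝ} (hq : 1 < q) :
    Summable (fun n : ℤ => max |(n : ℝ)| 1 ^ (-q)) := by
  have h1 : Summable (fun n : ℤ => |(n : ℝ)| ^ (-q)) := Real.summable_abs_int_rpow hq
  have h2 : Summable (fun n : ℤ => if n = 0 then (1:ℝ) else 0) :=
    summable_of_ne_finset_zero (s := {0}) (by intro b hb; simp at hb; simp [hb])
  refine (h1.add h2).congr fun n => ?_
  by_cases hn : n = 0
  · simp [hn, Real.zero_rpow (show -q ≠ 0 by intro h; rw [neg_eq_zero] at h; linarith)]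
  · have : (1:ℝ) ≤ |(n:ℝ)| := by
      rw [← Int.cast_abs]; exact_mod_cast Int.one_le_abs (by simpa using hn)
    simp [hn, max_eq_left this]

lemma summable_prod_max {d : ℕ} {q : ℝ} (hq : 1 < q) :
    Summable (fun z : Fin d → ℤ => ∏ i, max |(z i : ℝ)| 1 ^ (-q)) := by
  induction d with
  | zero => exact Summable.of_finite
  | succ d ih =>
    have key := (summable_int_max_rpow hq).mul_of_nonneg ih
      (fun n => by positivity) (fun z => by positivity)
    have := (Fin.consEquiv (fun _ : Fin (d+1) => ℤ)).summable_iff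
      (f := fun z : Fin (d+1) → ℤ => ∏ i, max |(z i : ℝ)| 1 ^ (-q))
    refine this.1 ?_
    refine key.congr fun p => ?_
    obtain ⟨n, w⟩ := p
    simp only [Function.comp, Fin.consEquiv_apply]
    rw [Fin.prod_univ_succ]
    simp [Fin.cons_zero, Fin.cons_succ]

lemma summable_max_nrm (d : ℕ) (hd : 1 ≤ d) {p : ℝ} (hp : (d : ℝ) < p) :
    Summable (fun z : Fin d → ℤ => max (nrm d z) 1 ^ (-p)) := by
  have hd0 : (0:ℝ) < d := by exact_mod_cast hd
  have hq : 1 < p / d := (one_lt_div hd0).2 hp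
  refine Summable.of_nonneg_of_le (fun z => by positivity) (fun z => ?_) (summable_prod_max hq)
  set M : ℝ := max (nrm d z) 1 with hM
  have hM1 : 1 ≤ M := le_max_right _ _
  have hM0 : 0 < M := lt_of_lt_of_le one_pos hM1
  have hprodle : ∏ i, max |(z i : ℝ)| 1 ≤ M ^ (d : ℕ) := by
    calc ∏ i, max |(z i : ℝ)| 1 ≤ ∏ _i : Fin d, M := by
          refine Finset.prod_le_prod (fun i _ => by positivity) (fun i _ => ?_)
          exact max_le_max (abs_coord_le_nrm d z i) le_rfl
      _ = M ^ (d : ℕ) := by simp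
  have hprodpos : 0 < ∏ i, max |(z i : ℝ)| 1 :=
    Finset.prod_pos (fun i _ => by positivity)
  have step1 : M ^ (-p) = ((M ^ (d : ℕ)) : ℝ) ^ (-(p/d)) := by
    rw [← Real.rpow_natCast M d, ← Real.rpow_mul hM0.le]
    congr 1
    field_simp
  have step2 : ((M ^ (d : ℕ)) : ℝ) ^ (-(p/d)) ≤ (∏ i, max |(z i : ℝ)| 1) ^ (-(p/d)) :=
    Real.rpow_le_rpow_of_nonpos hprodpos hprodle (neg_nonpos.2 (by positivity))
  have step3 : (∏ i, max |(z i : ℝ)| 1) ^ (-(p/d)) = ∏ i, max |(z i : ℝ)| 1 ^ (-(p/d)) :=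
    (Real.finset_prod_rpow _ _ (fun i _ => by positivity) _).symm
  rw [step1]
  exact step2.trans_eq step3

lemma tsum_max_nrm_le (d : ℕ) (hd : 1 ≤ d) {p : ℝ} (hp : (d : ℝ) < p) :
    ∃ C : ℝ, 0 < C ∧ ∀ L : ℝ, 1 ≤ L →
      Summable (fun y : Fin d → ℤ => max (nrm d y) L ^ (-p)) ∧
      ∑' y : Fin d → ℤ, max (nrm d y) L ^ (-p) ≤ C * L ^ ((d : ℝ) - p) := by
  have hS : Summable (fun z : Fin d → ℤ => max (nrm d z) 1 ^ (-p)) := summable_max_nrm d hd hp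
  set S : ℝ := ∑' z : Fin d → ℤ, max (nrm d z) 1 ^ (-p) with hSdef
  have hS0 : 0 ≤ S := tsum_nonneg (fun z => by positivity)
  have hsd : (1:ℝ) ≤ Real.sqrt d := by
    rw [show (1:ℝ) = Real.sqrt 1 by simp]
    exact Real.sqrt_le_sqrt (by exact_mod_cast hd)
  have hsd0 : (0:ℝ) < Real.sqrt d := lt_of_lt_of_le one_pos hsd
  refine ⟨(4 * Real.sqrt d) ^ p * S + 1, by positivity, fun L hL => ?_⟩
  have hL0 : (0:ℝ) < L := lt_of_lt_of_le one_pos hL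
  -- summability at L
  have hsumL : Summable (fun y : Fin d → ℤ => max (nrm d y) L ^ (-p)) := by
    refine Summable.of_nonneg_of_le (fun y => by positivity) (fun y => ?_) hS
    exact Real.rpow_le_rpow_of_nonpos (by positivity)
      (max_le_max le_rfl hL) (by linarith)
  refine ⟨hsumL, ?_⟩
  -- block decomposition
  set N : ℕ := ⌈L⌉₊ with hNdef
  have hN : 0 < N := Nat.ceil_pos.2 hL0
  haveI : NeZero N := ⟨hN.ne'⟩
  have hLN : L ≤ (N : ℝ) := Nat.le_ceil L
  have hNL : (N : ℝ) ≤ 2 * L := by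
    have := (Nat.ceil_lt_add_one hL0.le)
    linarith
  have hN0 : (0:ℝ) < N := lt_of_lt_of_le hL0 hLN
  -- the equivalence
  set E : ((Fin d → ℤ) × (Fin d → Fin N)) ≃ (Fin d → ℤ) :=
    (Equiv.arrowProdEquivProdArrow (Fin d) (fun _ => ℤ) (fun _ => Fin N)).symm.trans
      (Equiv.piCongrRight fun _ => (Int.divModEquiv N).symm) with hEdef
  have hEapp : ∀ (z : Fin d → ℤ) (r : Fin d → Fin N) (i : Fin d),
      E (z, r) i = z i * N + (r i : ℤ) := by
    intro z r i
    simp [hEdef, Equiv.arrowProdEquivProdArrow, Int.divModEquiv]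
  -- geometric claim
  have hgeo : ∀ (z : Fin d → ℤ) (r : Fin d → Fin N),
      (N : ℝ) / (4 * Real.sqrt d) * max (nrm d z) 1 ≤ max (nrm d (E (z, r))) L := by
    intro z r
    set y := E (z, r) with hy
    set w : Fin d → ℤ := fun i => (r i : ℤ) with hw
    have hyzw : y = (N : ℤ) • z + w := by
      funext i
      show E (z, r) i = (N : ℤ) • z i + w i
      rw [hEapp]
      simp [hw, mul_comm]
    have hnw : nrm d w ≤ Real.sqrt d * N := by
      refine nrm_le_of_coord d w N hN0.le (fun i => ?_)
      rw [hw]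
      simp only [Int.cast_natCast]
      rw [abs_of_nonneg (by positivity)]
      exact_mod_cast (r i).2.le
    have hnsmul : nrm d ((N : ℤ) • z) = N * nrm d z := by
      rw [nrm, nrm]
      have : toR d ((N : ℤ) • z) = (N : ℝ) • toR d z := by
        ext i
        show (((N : ℤ) * z i : ℤ) : ℝ) = (N : ℝ) * (z i : ℝ)
        push_cast; ring
      rw [this, norm_smul]
      simp [abs_of_nonneg hN0.le]
    have hlow : (N : ℝ) * nrm d z - Real.sqrt d * N ≤ nrm d y := by
      have h1 : nrm d ((N:ℤ) • z) - nrm d w ≤ nrm d y := by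
        rw [hyzw, nrm, nrm, nrm, toR_add]
        have := norm_sub_norm_le (toR d ((N:ℤ) • z)) (-(toR d w))
        simpa [sub_neg_eq_add] using this
      rw [hnsmul] at h1
      linarith
    set s := nrm d z with hs
    have hs0 : 0 ≤ s := nrm_nonneg d z
    rcases le_or_gt (2 * Real.sqrt d) s with hcase | hcase
    · have h1 : max s 1 = s := max_eq_left (by nlinarith)
      have h2 : nrm d y ≤ max (nrm d y) L := le_max_left _ _
      rw [h1]
      rw [div_mul_eq_mul_div, div_le_iff₀ (by positivity)]
      nlinarith [nrm_nonneg d y]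
    · have h2 : L ≤ max (nrm d y) L := le_max_right _ _
      have h3 : max s 1 ≤ 2 * Real.sqrt d := max_le hcase.le (by linarith)
      rw [div_mul_eq_mul_div, div_le_iff₀ (by positivity)]
      nlinarith
  -- pointwise rpow bound
  have hpt : ∀ q : (Fin d → ℤ) × (Fin d → Fin N),
      max (nrm d (E q)) L ^ (-p) ≤
        ((N : ℝ) / (4 * Real.sqrt d)) ^ (-p) * max (nrm d q.1) 1 ^ (-p) := by
    rintro ⟨z, r⟩
    have h1 := hgeo z r
    have h2 : (0:ℝ) < (N : ℝ) / (4 * Real.sqrt d) * max (nrm d z) 1 := by positivity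
    calc max (nrm d (E (z, r))) L ^ (-p)
        ≤ ((N : ℝ) / (4 * Real.sqrt d) * max (nrm d z) 1) ^ (-p) :=
          Real.rpow_le_rpow_of_nonpos h2 h1 (by linarith)
      _ = ((N : ℝ) / (4 * Real.sqrt d)) ^ (-p) * max (nrm d z) 1 ^ (-p) :=
          Real.mul_rpow (by positivity) (by positivity)
  -- sum it up
  have hfE : Summable (fun q : (Fin d → ℤ) × (Fin d → Fin N) => max (nrm d (E q)) L ^ (-p)) :=
    (E.summable_iff (f := fun y => max (nrm d y) L ^ (-p))).2 hsumL
  have hgsum : Summable (fun q : (Fin d → ℤ) × (Fin d → Fin N) =>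
      ((N : ℝ) / (4 * Real.sqrt d)) ^ (-p) * max (nrm d q.1) 1 ^ (-p)) := by
    have := ((hS.mul_left (((N : ℝ) / (4 * Real.sqrt d)) ^ (-p))).mul_of_nonneg
      (g := fun _ : Fin d → Fin N => (1:ℝ)) (Summable.of_finite)
      (fun z => by positivity) (fun _ => zero_le_one))
    refine this.congr fun q => ?_
    simp
  have step : ∑' y : Fin d → ℤ, max (nrm d y) L ^ (-p)
      ≤ (N : ℝ) ^ (d : ℕ) * (((N : ℝ) / (4 * Real.sqrt d)) ^ (-p) * S) := by
    rw [← E.tsum_eq (f := fun y => max (nrm d y) L ^ (-p))]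
    calc ∑' q, max (nrm d (E q)) L ^ (-p)
        ≤ ∑' q : (Fin d → ℤ) × (Fin d → Fin N),
            ((N : ℝ) / (4 * Real.sqrt d)) ^ (-p) * max (nrm d q.1) 1 ^ (-p) :=
          Summable.tsum_le_tsum hpt hfE hgsum
      _ = ∑' z : Fin d → ℤ, ∑' _r : Fin d → Fin N,
            ((N : ℝ) / (4 * Real.sqrt d)) ^ (-p) * max (nrm d z) 1 ^ (-p) :=
          Summable.tsum_prod' hgsum (fun z => Summable.of_finite)
      _ = (N : ℝ) ^ (d : ℕ) * (((N : ℝ) / (4 * Real.sqrt d)) ^ (-p) * S) := by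
          have hcard : (Fintype.card (Fin d → Fin N) : ℝ) = (N : ℝ) ^ (d : ℕ) := by
            simp [Fintype.card_fun]
          calc ∑' z : Fin d → ℤ, ∑' _r : Fin d → Fin N,
                ((N : ℝ) / (4 * Real.sqrt d)) ^ (-p) * max (nrm d z) 1 ^ (-p)
              = ∑' z : Fin d → ℤ, (N : ℝ) ^ (d : ℕ) *
                  (((N : ℝ) / (4 * Real.sqrt d)) ^ (-p) * max (nrm d z) 1 ^ (-p)) := by
                congr 1
                funext z
                rw [tsum_fintype, Finset.sum_const, Finset.card_univ, nsmul_eq_mul, hcard]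
            _ = (N : ℝ) ^ (d : ℕ) * ∑' z : Fin d → ℤ,
                  ((N : ℝ) / (4 * Real.sqrt d)) ^ (-p) * max (nrm d z) 1 ^ (-p) := tsum_mul_left
            _ = (N : ℝ) ^ (d : ℕ) * (((N : ℝ) / (4 * Real.sqrt d)) ^ (-p) * S) := by
                rw [tsum_mul_left]
  have hcn : ((N : ℝ) / (4 * Real.sqrt d)) ^ (-p) = (4 * Real.sqrt d) ^ p * (N : ℝ) ^ (-p) := by
    rw [Real.div_rpow hN0.le (by positivity),
      Real.rpow_neg (by positivity : (0:ℝ) ≤ 4 * Real.sqrt d)]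
    field_simp
  have halg : (N : ℝ) ^ (d : ℕ) * (((N : ℝ) / (4 * Real.sqrt d)) ^ (-p) * S)
      = (4 * Real.sqrt d) ^ p * S * (N : ℝ) ^ ((d : ℝ) - p) := by
    rw [hcn, ← Real.rpow_natCast (N : ℝ) d,
      show (d : ℝ) - p = (d : ℝ) + (-p) by ring, Real.rpow_add hN0]
    ring
  calc ∑' y : Fin d → ℤ, max (nrm d y) L ^ (-p)
      ≤ (N : ℝ) ^ (d : ℕ) * (((N : ℝ) / (4 * Real.sqrt d)) ^ (-p) * S) := step
    _ = (4 * Real.sqrt d) ^ p * S * (N : ℝ) ^ ((d : ℝ) - p) := halg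
    _ ≤ (4 * Real.sqrt d) ^ p * S * L ^ ((d : ℝ) - p) :=
        mul_le_mul_of_nonneg_left
          (Real.rpow_le_rpow_of_nonpos hL0 hLN (by linarith)) (by positivity)
    _ ≤ ((4 * Real.sqrt d) ^ p * S + 1) * L ^ ((d : ℝ) - p) := by
        have : (0:ℝ) ≤ L ^ ((d : ℝ) - p) := by positivity
        nlinarith

lemma log_half_pi_pos : 0 < Real.log (Real.pi / 2) := by
  apply Real.log_pos
  linarith [Real.pi_gt_three]

/-- Lemma B : choice of exponent `p` and sup bound. -/
lemma lemB (d : ℕ) {a₁ a₂ b₁ b₂ : ℝ} (hab : b₁ ≤ a₁) (ha₁ : (d : ℝ) < a₁)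
    (heq : a₁ = b₁ → b₂ ≤ a₂) :
    ∃ p K : ℝ, (d : ℝ) < p ∧ b₁ ≤ p ∧ 0 < K ∧
      ∀ t : ℝ, 1 ≤ t → t ^ (p - a₁) * Real.log (Real.pi / 2 * t) ^ (b₂ - a₂) ≤ K := by
  have hc₀ := log_half_pi_pos
  have hπ2 : (1:ℝ) < Real.pi / 2 := by linarith [Real.pi_gt_three]
  rcases le_or_gt b₂ a₂ with hba | hba
  · refine ⟨a₁, Real.log (Real.pi / 2) ^ (b₂ - a₂), ha₁, hab, by positivity, fun t ht => ?_⟩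
    have ht0 : (0:ℝ) < t := lt_of_lt_of_le one_pos ht
    have hl : Real.log (Real.pi / 2) ≤ Real.log (Real.pi / 2 * t) := by
      apply Real.log_le_log (by positivity)
      nlinarith
    rw [sub_self, Real.rpow_zero, one_mul]
    exact Real.rpow_le_rpow_of_nonpos hc₀ hl (by linarith)
  · have hne : b₁ < a₁ := by
      rcases lt_or_eq_of_le hab with h | h
      · exact h
      · exact absurd (heq h.symm) (not_le.2 hba)
    set p : ℝ := (max b₁ (d : ℝ) + a₁) / 2 with hp
    have hmax : max b₁ (d : ℝ) < a₁ := max_lt hne ha₁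
    have hp1 : (d : ℝ) < p := by
      have := le_max_right b₁ (d : ℝ); simp only [hp]; linarith
    have hp2 : b₁ ≤ p := by
      have := le_max_left b₁ (d : ℝ); simp only [hp]; linarith
    have hpa : p < a₁ := by simp only [hp]; linarith
    set δ : ℝ := a₁ - p with hδ
    set β : ℝ := b₂ - a₂ with hβ
    have hδ0 : 0 < δ := by simp only [hδ]; linarith
    have hβ0 : 0 < β := by simp only [hβ]; linarith
    set ε : ℝ := δ / β with hε
    have hε0 : 0 < ε := by positivity
    refine ⟨p, (Real.pi / 2) ^ δ / ε ^ β, hp1, hp2, by positivity, fun t ht => ?_⟩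
    have ht0 : (0:ℝ) < t := lt_of_lt_of_le one_pos ht
    have hx0 : (0:ℝ) < Real.pi / 2 * t := by positivity
    have hlog : Real.log (Real.pi / 2 * t) ≤ (Real.pi / 2 * t) ^ ε / ε :=
      Real.log_le_rpow_div hx0.le hε0
    have hlog0 : 0 ≤ Real.log (Real.pi / 2 * t) := by
      apply Real.log_nonneg; nlinarith
    have key : Real.log (Real.pi / 2 * t) ^ β ≤ (Real.pi / 2) ^ δ * t ^ δ / ε ^ β := by
      calc Real.log (Real.pi / 2 * t) ^ β ≤ ((Real.pi / 2 * t) ^ ε / ε) ^ β :=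
            Real.rpow_le_rpow hlog0 hlog hβ0.le
        _ = ((Real.pi / 2 * t) ^ ε) ^ β / ε ^ β :=
            Real.div_rpow (by positivity) hε0.le _
        _ = (Real.pi / 2 * t) ^ (ε * β) / ε ^ β := by
            rw [← Real.rpow_mul hx0.le]
        _ = (Real.pi / 2 * t) ^ δ / ε ^ β := by
            rw [hε]; congr 2; field_simp
        _ = (Real.pi / 2) ^ δ * t ^ δ / ε ^ β := by
            rw [Real.mul_rpow (by positivity) ht0.le]
    calc t ^ (p - a₁) * Real.log (Real.pi / 2 * t) ^ β
        ≤ t ^ (p - a₁) * ((Real.pi / 2) ^ δ * t ^ δ / ε ^ β) := by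
          apply mul_le_mul_of_nonneg_left key (by positivity)
      _ = (t ^ (p - a₁) * t ^ δ) * ((Real.pi / 2) ^ δ / ε ^ β) := by ring
      _ = (Real.pi / 2) ^ δ / ε ^ β := by
          rw [← Real.rpow_add ht0, show p - a₁ + δ = 0 by simp only [hδ]; ring,
            Real.rpow_zero, one_mul]

/-- Comparability of the weight at `u` and at `v ≥ u/2`. -/
lemma compareW {β₁ β₂ : ℝ} (hβ₁ : 0 ≤ β₁) (hβ₂ : 0 ≤ β₂) {L u v : ℝ} (hL : 1 ≤ L)
    (hu : L ≤ u) (hv : L ≤ v) (huv : u ≤ 2 * v) :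
    (Real.pi / 2 * v) ^ (-β₁) * Real.log (Real.pi / 2 * (v / L)) ^ (-β₂) ≤
      (2 ^ β₁ * (1 + Real.log 2 / Real.log (Real.pi / 2)) ^ β₂) *
        ((Real.pi / 2 * u) ^ (-β₁) * Real.log (Real.pi / 2 * (u / L)) ^ (-β₂)) := by
  have hc₀ := log_half_pi_pos
  have hπ : (0:ℝ) < Real.pi / 2 := by linarith [Real.pi_gt_three]
  have hL0 : (0:ℝ) < L := lt_of_lt_of_le one_pos hL
  have hu0 : (0:ℝ) < u := lt_of_lt_of_le hL0 hu
  have hv0 : (0:ℝ) < v := lt_of_lt_of_le hL0 hv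
  set ℓu := Real.log (Real.pi / 2 * (u / L)) with hℓu
  set ℓv := Real.log (Real.pi / 2 * (v / L)) with hℓv
  have hu1 : (1:ℝ) ≤ u / L := (one_le_div hL0).2 hu
  have hv1 : (1:ℝ) ≤ v / L := (one_le_div hL0).2 hv
  have hℓu0 : Real.log (Real.pi / 2) ≤ ℓu := by
    apply Real.log_le_log hπ; nlinarith
  have hℓv0 : Real.log (Real.pi / 2) ≤ ℓv := by
    apply Real.log_le_log hπ; nlinarith
  set K : ℝ := 1 + Real.log 2 / Real.log (Real.pi / 2) with hK
  have hK1 : (1:ℝ) ≤ K := by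
    have h2 : (0:ℝ) < Real.log 2 := Real.log_pos (by norm_num)
    simp only [hK]
    have : 0 < Real.log 2 / Real.log (Real.pi / 2) := by positivity
    linarith
  have hK0 : (0:ℝ) < K := lt_of_lt_of_le one_pos hK1
  -- part 1: power factor
  have part1 : (Real.pi / 2 * v) ^ (-β₁) ≤ 2 ^ β₁ * (Real.pi / 2 * u) ^ (-β₁) := by
    have h1 : Real.pi / 2 * u / 2 ≤ Real.pi / 2 * v := by nlinarith
    calc (Real.pi / 2 * v) ^ (-β₁) ≤ (Real.pi / 2 * u / 2) ^ (-β₁) :=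
          Real.rpow_le_rpow_of_nonpos (by positivity) h1 (by linarith)
      _ = 2 ^ β₁ * (Real.pi / 2 * u) ^ (-β₁) := by
          rw [Real.div_rpow (by positivity) (by norm_num),
            Real.rpow_neg (by norm_num : (0:ℝ) ≤ 2)]
          field_simp
  have hℓv'' : 0 < ℓv := lt_of_lt_of_le hc₀ hℓv0
  -- part 2: log factor
  have part2 : ℓv ^ (-β₂) ≤ K ^ β₂ * ℓu ^ (-β₂) := by
    have hstep : ℓu ≤ K * ℓv := by
      have h1 : ℓu ≤ Real.log 2 + ℓv := by
        have hdiv : u / L ≤ 2 * (v / L) := by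
          rw [div_le_iff₀ hL0]
          field_simp
          linarith
        have : Real.pi / 2 * (u / L) ≤ 2 * (Real.pi / 2 * (v / L)) := by nlinarith
        calc ℓu ≤ Real.log (2 * (Real.pi / 2 * (v / L))) :=
              Real.log_le_log (by positivity) this
          _ = Real.log 2 + ℓv := Real.log_mul (by norm_num) (by positivity)
      have h2 : Real.log 2 ≤ (Real.log 2 / Real.log (Real.pi / 2)) * ℓv := by
        rw [div_mul_eq_mul_div, le_div_iff₀ hc₀]
        have h3 : 0 ≤ Real.log 2 := Real.log_nonneg (by norm_num)
        nlinarith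
      simp only [hK]
      nlinarith
    have hℓu'' : 0 < ℓu := lt_of_lt_of_le hc₀ hℓu0
    have h4 : ℓu / K ≤ ℓv := by rw [div_le_iff₀ hK0]; nlinarith
    calc ℓv ^ (-β₂) ≤ (ℓu / K) ^ (-β₂) :=
          Real.rpow_le_rpow_of_nonpos (by positivity) h4 (by linarith)
      _ = K ^ β₂ * ℓu ^ (-β₂) := by
          rw [Real.div_rpow hℓu''.le hK0.le, Real.rpow_neg hK0.le]
          field_simp
  calc (Real.pi / 2 * v) ^ (-β₁) * ℓv ^ (-β₂)
      ≤ (2 ^ β₁ * (Real.pi / 2 * u) ^ (-β₁)) * (K ^ β₂ * ℓu ^ (-β₂)) :=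
        mul_le_mul part1 part2 (Real.rpow_nonneg hℓv''.le _) (by positivity)
    _ = (2 ^ β₁ * K ^ β₂) * ((Real.pi / 2 * u) ^ (-β₁) * ℓu ^ (-β₂)) := by ring

/-- Weight comparison: drop the log factor. -/
lemma W_le {β₁ β₂ L uu : ℝ} (hβ₂ : 0 ≤ β₂) (hL : 1 ≤ L) (huu : L ≤ uu) :
    (Real.pi / 2 * uu) ^ (-β₁) * Real.log (Real.pi / 2 * (uu / L)) ^ (-β₂) ≤
      ((Real.pi / 2) ^ (-β₁) * Real.log (Real.pi / 2) ^ (-β₂)) * uu ^ (-β₁) := by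
  have hc₀ := log_half_pi_pos
  have hπ : (0:ℝ) < Real.pi / 2 := by linarith [Real.pi_gt_three]
  have hL0 : (0:ℝ) < L := lt_of_lt_of_le one_pos hL
  have huu0 : (0:ℝ) < uu := lt_of_lt_of_le hL0 huu
  have h1 : (Real.pi / 2 * uu) ^ (-β₁) = (Real.pi / 2) ^ (-β₁) * uu ^ (-β₁) :=
    Real.mul_rpow hπ.le huu0.le
  have huL : (1:ℝ) ≤ uu / L := (one_le_div hL0).2 huu
  have h2 : Real.log (Real.pi / 2) ≤ Real.log (Real.pi / 2 * (uu / L)) := by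
    apply Real.log_le_log hπ; nlinarith
  have h3 : Real.log (Real.pi / 2 * (uu / L)) ^ (-β₂) ≤ Real.log (Real.pi / 2) ^ (-β₂) :=
    Real.rpow_le_rpow_of_nonpos hc₀ h2 (by linarith)
  calc (Real.pi / 2 * uu) ^ (-β₁) * Real.log (Real.pi / 2 * (uu / L)) ^ (-β₂)
      ≤ (Real.pi / 2 * uu) ^ (-β₁) * Real.log (Real.pi / 2) ^ (-β₂) :=
        mul_le_mul_of_nonneg_left h3 (Real.rpow_nonneg (by positivity) _)
    _ = ((Real.pi / 2) ^ (-β₁) * Real.log (Real.pi / 2) ^ (-β₂)) * uu ^ (-β₁) := by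
        rw [h1]; ring

/-- The scalar reduction (step P6). -/
lemma P6lem (d : ℕ) {a₁ a₂ b₁ b₂ p K_B : ℝ}
    (hKB : ∀ t : ℝ, 1 ≤ t → t ^ (p - a₁) * Real.log (Real.pi / 2 * t) ^ (b₂ - a₂) ≤ K_B)
    {L uu : ℝ} (hL : 1 ≤ L) (huu : L ≤ uu) :
    ((Real.pi / 2 * uu) ^ (-a₁) * Real.log (Real.pi / 2 * (uu / L)) ^ (-a₂)) *
        uu ^ (p - b₁) * L ^ ((d : ℝ) - p)
      ≤ (K_B * (Real.pi / 2) ^ (b₁ - a₁)) * L ^ ((d : ℝ) - a₁) *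
          ((Real.pi / 2 * uu) ^ (-b₁) * Real.log (Real.pi / 2 * (uu / L)) ^ (-b₂)) := by
  have hc₀ := log_half_pi_pos
  have hπ : (0:ℝ) < Real.pi / 2 := by linarith [Real.pi_gt_three]
  have hL0 : (0:ℝ) < L := lt_of_lt_of_le one_pos hL
  have huu0 : (0:ℝ) < uu := lt_of_lt_of_le hL0 huu
  set t : ℝ := uu / L with htdef
  have ht : (1:ℝ) ≤ t := (one_le_div hL0).2 huu
  have ht0 : (0:ℝ) < t := lt_of_lt_of_le one_pos ht
  set ℓ : ℝ := Real.log (Real.pi / 2 * t) with hℓdef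
  have hℓ0 : (0:ℝ) < ℓ := by
    apply lt_of_lt_of_le hc₀
    apply Real.log_le_log hπ; nlinarith
  have hπuu : (0:ℝ) < Real.pi / 2 * uu := by positivity
  have huut : uu = L * t := by rw [htdef]; field_simp
  have hloguu : Real.log (Real.pi / 2 * uu) = Real.log (Real.pi / 2) + (Real.log L + Real.log t) := by
    rw [huut, show Real.pi / 2 * (L * t) = Real.pi / 2 * (L * t) from rfl, ← Real.log_mul hL0.ne' ht0.ne',
      ← Real.log_mul hπ.ne' (by positivity : (L * t : ℝ) ≠ 0)]
  have hlogu : Real.log uu = Real.log L + Real.log t := by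
    rw [huut, Real.log_mul hL0.ne' ht0.ne']
  set R : ℝ := (Real.pi / 2) ^ (-a₁) * t ^ (-b₁) * ℓ ^ (-b₂) * L ^ ((d : ℝ) - a₁ - b₁) with hRdef
  have hR0 : 0 ≤ R := by positivity
  have E1 : ((Real.pi / 2 * uu) ^ (-a₁) * ℓ ^ (-a₂)) * uu ^ (p - b₁) * L ^ ((d : ℝ) - p)
      = (t ^ (p - a₁) * ℓ ^ (b₂ - a₂)) * R := by
    rw [hRdef]
    simp only [Real.rpow_def_of_pos hπuu, Real.rpow_def_of_pos hπ, Real.rpow_def_of_pos huu0,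
      Real.rpow_def_of_pos hL0, Real.rpow_def_of_pos ht0, Real.rpow_def_of_pos hℓ0,
      ← Real.exp_add]
    congr 1
    rw [hloguu, hlogu]
    ring
  have E2 : (K_B * (Real.pi / 2) ^ (b₁ - a₁)) * L ^ ((d : ℝ) - a₁) *
      ((Real.pi / 2 * uu) ^ (-b₁) * ℓ ^ (-b₂)) = K_B * R := by
    rw [hRdef]
    simp only [Real.rpow_def_of_pos hπuu, Real.rpow_def_of_pos hπ,
      Real.rpow_def_of_pos hL0, Real.rpow_def_of_pos ht0, Real.rpow_def_of_pos hℓ0,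
      ← Real.exp_add, mul_assoc]
    congr 2
    rw [hloguu]
    ring
  rw [E1, E2]
  exact mul_le_mul_of_nonneg_right (hKB t ht) hR0


/-- Convolution bound on power functions with logarithmic corrections,
case `a₁ > d`. -/
theorem conv_bound_a1_gt_d
    (d : ℕ) (hd : 1 ≤ d) (a₁ a₂ b₁ b₂ : ℝ)
    (hab : b₁ ≤ a₁) (hb₁ : 0 < b₁) (hsum : (d : ℝ) ≤ a₁ + b₁)
    (ha₂ : 0 ≤ a₂) (hb₂ : 0 ≤ b₂) (heq : a₁ = b₁ → b₂ ≤ a₂)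
    (ha₁ : (d : ℝ) < a₁) :
    ∃ C : ℝ, 0 < C ∧
      ∀ L : ℝ, 1 ≤ L → ∀ x : Fin d → ℤ,
        (∑' y : Fin d → ℤ,
            vee (nrm d (x - y)) L ^ (-a₁) *
              Real.log (vee (nrm d (x - y) / L) 1) ^ (-a₂) *
            (vee (nrm d y) L ^ (-b₁) * Real.log (vee (nrm d y / L) 1) ^ (-b₂)))
          ≤ C * L ^ ((d : ℝ) - a₁) *
              (vee (nrm d x) L ^ (-b₁) * Real.log (vee (nrm d x / L) 1) ^ (-b₂)) := by
  obtain ⟨p, K_B, hpd, hbp, hKB0, hBnd⟩ := lemB d hab ha₁ heq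
  obtain ⟨C₁, hC₁0, hA₁⟩ := tsum_max_nrm_le d hd ha₁
  obtain ⟨C₂, hC₂0, hA₂⟩ := tsum_max_nrm_le d hd hpd
  have hc₀ := log_half_pi_pos
  have hπ : (0:ℝ) < Real.pi / 2 := by linarith [Real.pi_gt_three]
  have ha₁0 : (0:ℝ) < a₁ := lt_of_lt_of_le hb₁ hab
  have hKc : (0:ℝ) < 1 + Real.log 2 / Real.log (Real.pi / 2) := by
    have h2 : (0:ℝ) ≤ Real.log 2 / Real.log (Real.pi / 2) :=
      div_nonneg (Real.log_nonneg (by norm_num)) hc₀.le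
    linarith
  have hK₁0 : (0:ℝ) < 2 ^ b₁ * (1 + Real.log 2 / Real.log (Real.pi / 2)) ^ b₂ :=
    mul_pos (Real.rpow_pos_of_pos two_pos _) (Real.rpow_pos_of_pos hKc _)
  have hK₂0 : (0:ℝ) < 2 ^ a₁ * (1 + Real.log 2 / Real.log (Real.pi / 2)) ^ a₂ :=
    mul_pos (Real.rpow_pos_of_pos two_pos _) (Real.rpow_pos_of_pos hKc _)
  have hcF0 : (0:ℝ) < (Real.pi / 2) ^ (-a₁) * Real.log (Real.pi / 2) ^ (-a₂) :=
    mul_pos (Real.rpow_pos_of_pos hπ _) (Real.rpow_pos_of_pos hc₀ _)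
  have hcG0 : (0:ℝ) < (Real.pi / 2) ^ (-b₁) * Real.log (Real.pi / 2) ^ (-b₂) :=
    mul_pos (Real.rpow_pos_of_pos hπ _) (Real.rpow_pos_of_pos hc₀ _)
  set K₁ : ℝ := 2 ^ b₁ * (1 + Real.log 2 / Real.log (Real.pi / 2)) ^ b₂ with hK₁def
  set K₂ : ℝ := 2 ^ a₁ * (1 + Real.log 2 / Real.log (Real.pi / 2)) ^ a₂ with hK₂def
  set cF : ℝ := (Real.pi / 2) ^ (-a₁) * Real.log (Real.pi / 2) ^ (-a₂) with hcFdef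
  set cG : ℝ := (Real.pi / 2) ^ (-b₁) * Real.log (Real.pi / 2) ^ (-b₂) with hcGdef
  have hKB' : (0:ℝ) < K_B * (Real.pi / 2) ^ (b₁ - a₁) :=
    mul_pos hKB0 (Real.rpow_pos_of_pos hπ _)
  refine ⟨K₁ * cF * C₁ + K₂ * cG * C₂ * (K_B * (Real.pi / 2) ^ (b₁ - a₁)), by positivity,
    fun L hL x => ?_⟩
  have hL0 : (0:ℝ) < L := lt_of_lt_of_le one_pos hL
  have hmaxdiv : ∀ t : ℝ, max (t / L) 1 = max t L / L := by
    intro t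
    rw [eq_div_iff hL0.ne', max_mul_of_nonneg _ _ hL0.le, div_mul_cancel₀ _ hL0.ne', one_mul]
  have hrwF : ∀ z : Fin d → ℤ,
      vee (nrm d z) L ^ (-a₁) * Real.log (vee (nrm d z / L) 1) ^ (-a₂)
        = (Real.pi / 2 * max (nrm d (z)) L) ^ (-a₁) * Real.log (Real.pi / 2 * (max (nrm d (z)) L / L)) ^ (-a₂) := by
    intro z
    simp only [vee]
    rw [hmaxdiv]
  have hrwG : ∀ z : Fin d → ℤ,
      vee (nrm d z) L ^ (-b₁) * Real.log (vee (nrm d z / L) 1) ^ (-b₂)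
        = (Real.pi / 2 * max (nrm d (z)) L) ^ (-b₁) * Real.log (Real.pi / 2 * (max (nrm d (z)) L / L)) ^ (-b₂) := by
    intro z
    simp only [vee]
    rw [hmaxdiv]
  have hLu : ∀ z : Fin d → ℤ, L ≤ max (nrm d z) L := fun z => le_max_right _ _
  have hu0 : ∀ z : Fin d → ℤ, (0:ℝ) < max (nrm d z) L := fun z => lt_of_lt_of_le hL0 (hLu z)
  have hlogpos : ∀ z : Fin d → ℤ,
      (0:ℝ) < Real.log (Real.pi / 2 * (max (nrm d z) L / L)) := by
    intro z
    refine lt_of_lt_of_le hc₀ (Real.log_le_log hπ ?_)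
    have h1 : (1:ℝ) ≤ max (nrm d z) L / L := (one_le_div hL0).2 (hLu z)
    nlinarith
  have hFnn : ∀ z : Fin d → ℤ, (0:ℝ) ≤ (Real.pi / 2 * max (nrm d (z)) L) ^ (-a₁) * Real.log (Real.pi / 2 * (max (nrm d (z)) L / L)) ^ (-a₂) :=
    fun z => mul_nonneg (Real.rpow_nonneg (by positivity) _)
      (Real.rpow_nonneg (hlogpos z).le _)
  have hGnn : ∀ z : Fin d → ℤ, (0:ℝ) ≤ (Real.pi / 2 * max (nrm d (z)) L) ^ (-b₁) * Real.log (Real.pi / 2 * (max (nrm d (z)) L / L)) ^ (-b₂) :=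
    fun z => mul_nonneg (Real.rpow_nonneg (by positivity) _)
      (Real.rpow_nonneg (hlogpos z).le _)
  have hFle : ∀ z : Fin d → ℤ, (Real.pi / 2 * max (nrm d (z)) L) ^ (-a₁) * Real.log (Real.pi / 2 * (max (nrm d (z)) L / L)) ^ (-a₂) ≤ cF * (max (nrm d (z)) L) ^ (-a₁) :=
    fun z => W_le ha₂ hL (hLu z)
  have hGle : ∀ z : Fin d → ℤ, (Real.pi / 2 * max (nrm d (z)) L) ^ (-b₁) * Real.log (Real.pi / 2 * (max (nrm d (z)) L / L)) ^ (-b₂) ≤ cG * (max (nrm d (z)) L) ^ (-b₁) :=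
    fun z => W_le hb₂ hL (hLu z)
  -- the pointwise splitting
  have h3 : ∀ y : Fin d → ℤ,
      ((Real.pi / 2 * max (nrm d (x - y)) L) ^ (-a₁) * Real.log (Real.pi / 2 * (max (nrm d (x - y)) L / L)) ^ (-a₂)) * ((Real.pi / 2 * max (nrm d (y)) L) ^ (-b₁) * Real.log (Real.pi / 2 * (max (nrm d (y)) L / L)) ^ (-b₂))
        ≤ K₁ * ((Real.pi / 2 * max (nrm d (x)) L) ^ (-b₁) * Real.log (Real.pi / 2 * (max (nrm d (x)) L / L)) ^ (-b₂)) * ((Real.pi / 2 * max (nrm d (x - y)) L) ^ (-a₁) * Real.log (Real.pi / 2 * (max (nrm d (x - y)) L / L)) ^ (-a₂))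
          + (K₂ * ((Real.pi / 2 * max (nrm d (x)) L) ^ (-a₁) * Real.log (Real.pi / 2 * (max (nrm d (x)) L / L)) ^ (-a₂)) * cG * (max (nrm d (x)) L) ^ (p - b₁)) * (max (nrm d (y)) L) ^ (-p) := by
    intro y
    have hg2nn : (0:ℝ) ≤ (K₂ * ((Real.pi / 2 * max (nrm d (x)) L) ^ (-a₁) * Real.log (Real.pi / 2 * (max (nrm d (x)) L / L)) ^ (-a₂)) * cG * (max (nrm d (x)) L) ^ (p - b₁)) * (max (nrm d (y)) L) ^ (-p) :=
      mul_nonneg (mul_nonneg (mul_nonneg (mul_nonneg hK₂0.le (hFnn x)) hcG0.le)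
        (Real.rpow_nonneg (hu0 x).le _)) (Real.rpow_nonneg (hu0 y).le _)
    have hg1nn : (0:ℝ) ≤ K₁ * ((Real.pi / 2 * max (nrm d (x)) L) ^ (-b₁) * Real.log (Real.pi / 2 * (max (nrm d (x)) L / L)) ^ (-b₂)) * ((Real.pi / 2 * max (nrm d (x - y)) L) ^ (-a₁) * Real.log (Real.pi / 2 * (max (nrm d (x - y)) L / L)) ^ (-a₂)) :=
      mul_nonneg (mul_nonneg hK₁0.le (hGnn x)) (hFnn (x - y))
    rcases le_or_gt (nrm d x) (2 * nrm d y) with hcase | hcase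
    · have huv : max (nrm d (x)) L ≤ 2 * max (nrm d (y)) L := by
        have h1 := le_max_left (nrm d y) L
        have h2 := le_max_right (nrm d y) L
        exact max_le (by linarith) (by linarith)
      have hcomp := compareW hb₁.le hb₂ hL (hLu x) (hLu y) huv
      calc ((Real.pi / 2 * max (nrm d (x - y)) L) ^ (-a₁) * Real.log (Real.pi / 2 * (max (nrm d (x - y)) L / L)) ^ (-a₂)) * ((Real.pi / 2 * max (nrm d (y)) L) ^ (-b₁) * Real.log (Real.pi / 2 * (max (nrm d (y)) L / L)) ^ (-b₂))
          ≤ ((Real.pi / 2 * max (nrm d (x - y)) L) ^ (-a₁) * Real.log (Real.pi / 2 * (max (nrm d (x - y)) L / L)) ^ (-a₂)) * (K₁ * ((Real.pi / 2 * max (nrm d (x)) L) ^ (-b₁) * Real.log (Real.pi / 2 * (max (nrm d (x)) L / L)) ^ (-b₂))) := by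
            refine mul_le_mul_of_nonneg_left ?_ (hFnn (x - y))
            exact hcomp
        _ = K₁ * ((Real.pi / 2 * max (nrm d (x)) L) ^ (-b₁) * Real.log (Real.pi / 2 * (max (nrm d (x)) L / L)) ^ (-b₂)) * ((Real.pi / 2 * max (nrm d (x - y)) L) ^ (-a₁) * Real.log (Real.pi / 2 * (max (nrm d (x - y)) L / L)) ^ (-a₂)) := by ring
        _ ≤ _ := le_add_of_nonneg_right hg2nn
    · have hxy : nrm d x ≤ 2 * nrm d (x - y) := by
        have h1 := nrm_sub_ge d x y
        linarith
      have huv : max (nrm d (x)) L ≤ 2 * max (nrm d (x - y)) L := by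
        have h1 := le_max_left (nrm d (x - y)) L
        have h2 := le_max_right (nrm d (x - y)) L
        exact max_le (by linarith) (by linarith)
      have hcomp := compareW ha₁0.le ha₂ hL (hLu x) (hLu (x - y)) huv
      have hsplit : (max (nrm d (y)) L) ^ (-b₁) = (max (nrm d (y)) L) ^ (p - b₁) * (max (nrm d (y)) L) ^ (-p) := by
        rw [← Real.rpow_add (hu0 y)]
        congr 1
        ring
      have huyx : max (nrm d (y)) L ≤ max (nrm d (x)) L := by
        have := nrm_nonneg d y
        exact max_le_max (by linarith) le_rfl
      have hpow : (max (nrm d (y)) L) ^ (p - b₁) ≤ (max (nrm d (x)) L) ^ (p - b₁) :=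
        Real.rpow_le_rpow (hu0 y).le huyx (by linarith)
      calc ((Real.pi / 2 * max (nrm d (x - y)) L) ^ (-a₁) * Real.log (Real.pi / 2 * (max (nrm d (x - y)) L / L)) ^ (-a₂)) * ((Real.pi / 2 * max (nrm d (y)) L) ^ (-b₁) * Real.log (Real.pi / 2 * (max (nrm d (y)) L / L)) ^ (-b₂))
          ≤ (K₂ * ((Real.pi / 2 * max (nrm d (x)) L) ^ (-a₁) * Real.log (Real.pi / 2 * (max (nrm d (x)) L / L)) ^ (-a₂))) * ((Real.pi / 2 * max (nrm d (y)) L) ^ (-b₁) * Real.log (Real.pi / 2 * (max (nrm d (y)) L / L)) ^ (-b₂)) :=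
            mul_le_mul_of_nonneg_right hcomp (hGnn y)
        _ ≤ (K₂ * ((Real.pi / 2 * max (nrm d (x)) L) ^ (-a₁) * Real.log (Real.pi / 2 * (max (nrm d (x)) L / L)) ^ (-a₂))) * (cG * (max (nrm d (y)) L) ^ (-b₁)) :=
            mul_le_mul_of_nonneg_left (hGle y) (mul_nonneg hK₂0.le (hFnn x))
        _ = (K₂ * ((Real.pi / 2 * max (nrm d (x)) L) ^ (-a₁) * Real.log (Real.pi / 2 * (max (nrm d (x)) L / L)) ^ (-a₂))) * (cG * ((max (nrm d (y)) L) ^ (p - b₁) * (max (nrm d (y)) L) ^ (-p))) := by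
            rw [← hsplit]
        _ ≤ (K₂ * ((Real.pi / 2 * max (nrm d (x)) L) ^ (-a₁) * Real.log (Real.pi / 2 * (max (nrm d (x)) L / L)) ^ (-a₂))) * (cG * ((max (nrm d (x)) L) ^ (p - b₁) * (max (nrm d (y)) L) ^ (-p))) := by
            refine mul_le_mul_of_nonneg_left ?_ (mul_nonneg hK₂0.le (hFnn x))
            refine mul_le_mul_of_nonneg_left ?_ hcG0.le
            exact mul_le_mul_of_nonneg_right hpow (Real.rpow_nonneg (hu0 y).le _)
        _ = (K₂ * ((Real.pi / 2 * max (nrm d (x)) L) ^ (-a₁) * Real.log (Real.pi / 2 * (max (nrm d (x)) L / L)) ^ (-a₂)) * cG * (max (nrm d (x)) L) ^ (p - b₁)) * (max (nrm d (y)) L) ^ (-p) := by ring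
        _ ≤ _ := le_add_of_nonneg_left hg1nn
  -- summability
  have hsub : ∀ (q : ℝ), Summable (fun z : Fin d → ℤ => max (nrm d z) L ^ (-q)) →
      Summable (fun y : Fin d → ℤ => max (nrm d (x - y)) L ^ (-q)) := by
    intro q hq
    refine (((Equiv.subLeft x).summable_iff
      (f := fun z : Fin d → ℤ => max (nrm d z) L ^ (-q))).2 hq).congr fun y => ?_
    simp [Equiv.subLeft]
  have hsum1 : Summable (fun y : Fin d → ℤ => max (nrm d (x - y)) L ^ (-a₁)) :=
    hsub a₁ (hA₁ L hL).1
  have hsumF : Summable (fun y : Fin d → ℤ => (Real.pi / 2 * max (nrm d (x - y)) L) ^ (-a₁) * Real.log (Real.pi / 2 * (max (nrm d (x - y)) L / L)) ^ (-a₂)) :=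
    Summable.of_nonneg_of_le (fun y => hFnn (x - y)) (fun y => hFle (x - y))
      (hsum1.mul_left cF)
  have hg₁sum : Summable (fun y : Fin d → ℤ => K₁ * ((Real.pi / 2 * max (nrm d (x)) L) ^ (-b₁) * Real.log (Real.pi / 2 * (max (nrm d (x)) L / L)) ^ (-b₂)) * ((Real.pi / 2 * max (nrm d (x - y)) L) ^ (-a₁) * Real.log (Real.pi / 2 * (max (nrm d (x - y)) L / L)) ^ (-a₂))) :=
    hsumF.mul_left _
  have hg₂sum : Summable (fun y : Fin d → ℤ =>
      (K₂ * ((Real.pi / 2 * max (nrm d (x)) L) ^ (-a₁) * Real.log (Real.pi / 2 * (max (nrm d (x)) L / L)) ^ (-a₂)) * cG * (max (nrm d (x)) L) ^ (p - b₁)) * (max (nrm d (y)) L) ^ (-p)) :=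
    (hA₂ L hL).1.mul_left _
  have hfsum : Summable (fun y : Fin d → ℤ => ((Real.pi / 2 * max (nrm d (x - y)) L) ^ (-a₁) * Real.log (Real.pi / 2 * (max (nrm d (x - y)) L / L)) ^ (-a₂)) * ((Real.pi / 2 * max (nrm d (y)) L) ^ (-b₁) * Real.log (Real.pi / 2 * (max (nrm d (y)) L / L)) ^ (-b₂))) :=
    Summable.of_nonneg_of_le (fun y => mul_nonneg (hFnn (x - y)) (hGnn y)) h3
      (hg₁sum.add hg₂sum)
  -- translate sums
  have htrans : ∑' y : Fin d → ℤ, max (nrm d (x - y)) L ^ (-a₁)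
      = ∑' z : Fin d → ℤ, max (nrm d z) L ^ (-a₁) := by
    rw [← (Equiv.subLeft x).tsum_eq (f := fun z : Fin d → ℤ => max (nrm d z) L ^ (-a₁))]
    exact tsum_congr fun y => by simp [Equiv.subLeft]
  have hsumFbound : ∑' y : Fin d → ℤ, (Real.pi / 2 * max (nrm d (x - y)) L) ^ (-a₁) * Real.log (Real.pi / 2 * (max (nrm d (x - y)) L / L)) ^ (-a₂) ≤ cF * (C₁ * L ^ ((d:ℝ) - a₁)) := by
    calc ∑' y : Fin d → ℤ, (Real.pi / 2 * max (nrm d (x - y)) L) ^ (-a₁) * Real.log (Real.pi / 2 * (max (nrm d (x - y)) L / L)) ^ (-a₂)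
        ≤ ∑' y : Fin d → ℤ, cF * (max (nrm d (x - y)) L ^ (-a₁)) :=
          Summable.tsum_le_tsum (fun y => hFle (x - y)) hsumF (hsum1.mul_left cF)
      _ = cF * ∑' y : Fin d → ℤ, max (nrm d (x - y)) L ^ (-a₁) := tsum_mul_left
      _ = cF * ∑' z : Fin d → ℤ, max (nrm d z) L ^ (-a₁) := by rw [htrans]
      _ ≤ cF * (C₁ * L ^ ((d:ℝ) - a₁)) :=
          mul_le_mul_of_nonneg_left (hA₁ L hL).2 hcF0.le
  have hP6 := P6lem (b₁ := b₁) d hBnd hL (hLu x)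
  -- main chain
  rw [tsum_congr (fun y : Fin d → ℤ => by rw [hrwF (x - y), hrwG y] :
    ∀ y : Fin d → ℤ, vee (nrm d (x - y)) L ^ (-a₁) *
        Real.log (vee (nrm d (x - y) / L) 1) ^ (-a₂) *
      (vee (nrm d y) L ^ (-b₁) * Real.log (vee (nrm d y / L) 1) ^ (-b₂))
      = ((Real.pi / 2 * max (nrm d (x - y)) L) ^ (-a₁) * Real.log (Real.pi / 2 * (max (nrm d (x - y)) L / L)) ^ (-a₂)) * ((Real.pi / 2 * max (nrm d (y)) L) ^ (-b₁) * Real.log (Real.pi / 2 * (max (nrm d (y)) L / L)) ^ (-b₂))), hrwG x]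
  calc ∑' y : Fin d → ℤ, ((Real.pi / 2 * max (nrm d (x - y)) L) ^ (-a₁) * Real.log (Real.pi / 2 * (max (nrm d (x - y)) L / L)) ^ (-a₂)) * ((Real.pi / 2 * max (nrm d (y)) L) ^ (-b₁) * Real.log (Real.pi / 2 * (max (nrm d (y)) L / L)) ^ (-b₂))
      ≤ ∑' y : Fin d → ℤ, (K₁ * ((Real.pi / 2 * max (nrm d (x)) L) ^ (-b₁) * Real.log (Real.pi / 2 * (max (nrm d (x)) L / L)) ^ (-b₂)) * ((Real.pi / 2 * max (nrm d (x - y)) L) ^ (-a₁) * Real.log (Real.pi / 2 * (max (nrm d (x - y)) L / L)) ^ (-a₂))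
          + (K₂ * ((Real.pi / 2 * max (nrm d (x)) L) ^ (-a₁) * Real.log (Real.pi / 2 * (max (nrm d (x)) L / L)) ^ (-a₂)) * cG * (max (nrm d (x)) L) ^ (p - b₁)) * (max (nrm d (y)) L) ^ (-p)) :=
        Summable.tsum_le_tsum h3 hfsum (hg₁sum.add hg₂sum)
    _ = (∑' y : Fin d → ℤ, K₁ * ((Real.pi / 2 * max (nrm d (x)) L) ^ (-b₁) * Real.log (Real.pi / 2 * (max (nrm d (x)) L / L)) ^ (-b₂)) * ((Real.pi / 2 * max (nrm d (x - y)) L) ^ (-a₁) * Real.log (Real.pi / 2 * (max (nrm d (x - y)) L / L)) ^ (-a₂)))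
          + ∑' y : Fin d → ℤ,
            (K₂ * ((Real.pi / 2 * max (nrm d (x)) L) ^ (-a₁) * Real.log (Real.pi / 2 * (max (nrm d (x)) L / L)) ^ (-a₂)) * cG * (max (nrm d (x)) L) ^ (p - b₁)) * (max (nrm d (y)) L) ^ (-p) :=
        Summable.tsum_add hg₁sum hg₂sum
    _ ≤ K₁ * ((Real.pi / 2 * max (nrm d (x)) L) ^ (-b₁) * Real.log (Real.pi / 2 * (max (nrm d (x)) L / L)) ^ (-b₂)) * (cF * (C₁ * L ^ ((d:ℝ) - a₁)))
          + (K₂ * ((Real.pi / 2 * max (nrm d (x)) L) ^ (-a₁) * Real.log (Real.pi / 2 * (max (nrm d (x)) L / L)) ^ (-a₂)) * cG * (max (nrm d (x)) L) ^ (p - b₁)) * (C₂ * L ^ ((d:ℝ) - p)) := by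
        refine add_le_add ?_ ?_
        · rw [tsum_mul_left]
          exact mul_le_mul_of_nonneg_left hsumFbound
            (mul_nonneg hK₁0.le (hGnn x))
        · rw [tsum_mul_left]
          refine mul_le_mul_of_nonneg_left (hA₂ L hL).2 ?_
          exact mul_nonneg (mul_nonneg (mul_nonneg hK₂0.le (hFnn x)) hcG0.le)
            (Real.rpow_nonneg (hu0 x).le _)
    _ = K₁ * cF * C₁ * (L ^ ((d:ℝ) - a₁) * ((Real.pi / 2 * max (nrm d (x)) L) ^ (-b₁) * Real.log (Real.pi / 2 * (max (nrm d (x)) L / L)) ^ (-b₂)))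
          + K₂ * cG * C₂ * (((Real.pi / 2 * max (nrm d (x)) L) ^ (-a₁) * Real.log (Real.pi / 2 * (max (nrm d (x)) L / L)) ^ (-a₂)) * (max (nrm d (x)) L) ^ (p - b₁) * L ^ ((d:ℝ) - p)) := by
        ring
    _ ≤ K₁ * cF * C₁ * (L ^ ((d:ℝ) - a₁) * ((Real.pi / 2 * max (nrm d (x)) L) ^ (-b₁) * Real.log (Real.pi / 2 * (max (nrm d (x)) L / L)) ^ (-b₂)))
          + K₂ * cG * C₂ * ((K_B * (Real.pi / 2) ^ (b₁ - a₁)) * L ^ ((d:ℝ) - a₁) *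
            ((Real.pi / 2 * max (nrm d (x)) L) ^ (-b₁) * Real.log (Real.pi / 2 * (max (nrm d (x)) L / L)) ^ (-b₂))) := by
        refine add_le_add_right ?_ _
        refine mul_le_mul_of_nonneg_left hP6 ?_
        exact mul_nonneg (mul_nonneg hK₂0.le hcG0.le) hC₂0.le
    _ = (K₁ * cF * C₁ + K₂ * cG * C₂ * (K_B * (Real.pi / 2) ^ (b₁ - a₁))) *
          L ^ ((d:ℝ) - a₁) * ((Real.pi / 2 * max (nrm d (x)) L) ^ (-b₁) * Real.log (Real.pi / 2 * (max (nrm d (x)) L / L)) ^ (-b₂)) := by ring
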